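/- A topological space (X, 𝒯^α) is s-closed if and only if (X, 𝒯) is s-closed. -/

import Mathlib

open Set TopologicalSpace

universe u v

variable {X : Type u} {Y : Type v}

/-- A set is an α-set (α-open) w.r.t. the topology `T` if `A ⊆ Int (Cl (Int A))`. -/
def AlphaOpen (T : TopologicalSpace X) (A : Set X) : Prop :=
  letI := T
  A ⊆ interior (closure (interior A))

/-- The α-topology `𝒯^α`, whose open sets are exactly the α-sets of `T`. -/
def alphaTop (T : TopologicalSpace X) : TopologicalSpace X :=
  letI := T
  { IsOpen := fun A => A ⊆ interior (closure (interior A))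
    isOpen_univ := by simp
    isOpen_inter := by
      intro A B hA hB
      have hsub : interior (closure (interior A)) ∩ interior (closure (interior B)) ⊆
          closure (interior (A ∩ B)) := by
        intro x hx
        have h1 : interior (closure (interior B)) ∩ closure (interior A) ⊆
            closure (interior (closure (interior B)) ∩ interior A) :=
          isOpen_interior.inter_closure
        have h2 : interior (closure (interior B)) ∩ interior A ⊆
            closure (interior A ∩ interior B) := by
          intro y hy
          have h : interior A ∩ closure (interior B) ⊆ closure (interior A ∩ interior B) :=
            isOpen_interior.inter_closure
          exact h ⟨hy.2, interior_subset hy.1⟩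
        have h3 : closure (interior (closure (interior B)) ∩ interior A) ⊆
            closure (interior A ∩ interior B) := by
          calc closure (interior (closure (interior B)) ∩ interior A)
              ⊆ closure (closure (interior A ∩ interior B)) := closure_mono h2
            _ = closure (interior A ∩ interior B) := closure_closure
        have hx' : x ∈ closure (interior A ∩ interior B) :=
          h3 (h1 ⟨hx.2, interior_subset hx.1⟩)
        rwa [← interior_inter] at hx'
      intro x hx
      exact interior_maximal hsub (isOpen_interior.inter isOpen_interior) ⟨hA hx.1, hB hx.2⟩
    isOpen_sUnion := by
      intro S hS x hx
      obtain ⟨t, htS, hxt⟩ := hx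
      have h : interior (closure (interior t)) ⊆ interior (closure (interior (⋃₀ S))) :=
        interior_mono (closure_mono (interior_mono (subset_sUnion_of_mem htS)))
      exact h (hS t htS hxt) }

/-- `A` is semi-open w.r.t. `T` if `A ⊆ Cl (Int A)`. -/
def SemiOpen (T : TopologicalSpace X) (A : Set X) : Prop :=
  letI := T
  A ⊆ closure (interior A)

/-- `A` is semi-closed if its complement is semi-open. -/
def SemiClosed (T : TopologicalSpace X) (A : Set X) : Prop :=
  SemiOpen T Aᶜ

/-- The semi-closure of `A`: the intersection of all semi-closed sets containing `A`. -/
def sCl (T : TopologicalSpace X) (A : Set X) : Set X :=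
  ⋂₀ {C | SemiClosed T C ∧ A ⊆ C}

/-- `A` is sg-closed if `sCl A ⊆ U` whenever `A ⊆ U` with `U` semi-open. -/
def SgClosed (T : TopologicalSpace X) (A : Set X) : Prop :=
  ∀ U : Set X, SemiOpen T U → A ⊆ U → sCl T A ⊆ U

/-- `A` is sg-open if its complement is sg-closed. -/
def SgOpen (T : TopologicalSpace X) (A : Set X) : Prop :=
  SgClosed T Aᶜ

/-- `A` is regular closed w.r.t. `T` if `A = Cl (Int A)`. -/
def RegClosed (T : TopologicalSpace X) (A : Set X) : Prop :=
  letI := T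
  A = closure (interior A)

/-- A family `𝒱` refines a family `𝒰` if every member of `𝒱` is contained in a member of `𝒰`. -/
def Refines (𝒱 𝒰 : Set (Set X)) : Prop :=
  ∀ V ∈ 𝒱, ∃ U ∈ 𝒰, V ⊆ U

/-- A family of sets is locally finite if every point has a neighbourhood
meeting only finitely many members. -/
def LocFinite (T : TopologicalSpace X) (𝒱 : Set (Set X)) : Prop :=
  ∀ x : X, ∃ N ∈ @nhds X T x, {V ∈ 𝒱 | (V ∩ N).Nonempty}.Finite

/-- A family of sets is locally countable if every point has a neighbourhood
meeting only countably many members. -/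
def LocCountable (T : TopologicalSpace X) (𝒱 : Set (Set X)) : Prop :=
  ∀ x : X, ∃ N ∈ @nhds X T x, {V ∈ 𝒱 | (V ∩ N).Nonempty}.Countable

/-- A family of sets is discrete if every point has a neighbourhood
meeting at most one member. -/
def DiscreteFam (T : TopologicalSpace X) (𝒱 : Set (Set X)) : Prop :=
  ∀ x : X, ∃ N ∈ @nhds X T x, {V ∈ 𝒱 | (V ∩ N).Nonempty}.Subsingleton

/-- A family is σ-discrete if it is a countable union of discrete families. -/
def SigmaDiscrete (T : TopologicalSpace X) (𝒱 : Set (Set X)) : Prop :=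
  ∃ 𝒲 : ℕ → Set (Set X), 𝒱 = ⋃ n, 𝒲 n ∧ ∀ n, DiscreteFam T (𝒲 n)

/-- A family is closure-preserving if for every subfamily the closure of the
union is the union of the closures. -/
def ClosurePreserving (T : TopologicalSpace X) (𝒲 : Set (Set X)) : Prop :=
  letI := T
  ∀ 𝒲' ⊆ 𝒲, closure (⋃₀ 𝒲') = ⋃ W ∈ 𝒲', closure W

/-- A family is σ-closure-preserving if it is a countable union of
closure-preserving families. -/
def SigmaClosurePreserving (T : TopologicalSpace X) (𝒱 : Set (Set X)) : Prop :=
  ∃ 𝒲 : ℕ → Set (Set X), 𝒱 = ⋃ n, 𝒲 n ∧ ∀ n, ClosurePreserving T (𝒲 n)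

/-- Semi-compact: every semi-open cover has a finite subcover. -/
def SemiCompact (T : TopologicalSpace X) : Prop :=
  ∀ 𝒰 : Set (Set X), (∀ U ∈ 𝒰, SemiOpen T U) → ⋃₀ 𝒰 = univ →
    ∃ 𝒱 ⊆ 𝒰, 𝒱.Finite ∧ ⋃₀ 𝒱 = univ

/-- S-closed: for every semi-open cover there is a finite subfamily
whose closures cover. -/
def SClosed (T : TopologicalSpace X) : Prop :=
  letI := T
  ∀ 𝒰 : Set (Set X), (∀ U ∈ 𝒰, SemiOpen T U) → ⋃₀ 𝒰 = univ →
    ∃ 𝒱 ⊆ 𝒰, 𝒱.Finite ∧ (⋃ V ∈ 𝒱, closure V) = univ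

/-- s-closed: for every semi-open cover there is a finite subfamily
whose semi-closures cover. -/
def SmallSClosed (T : TopologicalSpace X) : Prop :=
  ∀ 𝒰 : Set (Set X), (∀ U ∈ 𝒰, SemiOpen T U) → ⋃₀ 𝒰 = univ →
    ∃ 𝒱 ⊆ 𝒰, 𝒱.Finite ∧ (⋃ V ∈ 𝒱, sCl T V) = univ

/-- rc-Lindelöf: every regular closed cover has a countable subcover. -/
def RcLindelof (T : TopologicalSpace X) : Prop :=
  ∀ 𝒰 : Set (Set X), (∀ U ∈ 𝒰, RegClosed T U) → ⋃₀ 𝒰 = univ →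
    ∃ 𝒱 ⊆ 𝒰, 𝒱.Countable ∧ ⋃₀ 𝒱 = univ

/-- sg-compact: every sg-open cover has a finite subcover. -/
def SgCompact (T : TopologicalSpace X) : Prop :=
  ∀ 𝒰 : Set (Set X), (∀ U ∈ 𝒰, SgOpen T U) → ⋃₀ 𝒰 = univ →
    ∃ 𝒱 ⊆ 𝒰, 𝒱.Finite ∧ ⋃₀ 𝒱 = univ

/-- `A` is S-closed relative to `X`: every cover of `A` by semi-open sets of `X`
has a finite subfamily whose closures cover `A`. -/
def SClosedRel (T : TopologicalSpace X) (A : Set X) : Prop :=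
  letI := T
  ∀ 𝒰 : Set (Set X), (∀ U ∈ 𝒰, SemiOpen T U) → A ⊆ ⋃₀ 𝒰 →
    ∃ 𝒱 ⊆ 𝒰, 𝒱.Finite ∧ A ⊆ ⋃ V ∈ 𝒱, closure V

/-- `A` is s-closed relative to `X`: every cover of `A` by semi-open sets of `X`
has a finite subfamily whose semi-closures cover `A`. -/
def SmallSClosedRel (T : TopologicalSpace X) (A : Set X) : Prop :=
  ∀ 𝒰 : Set (Set X), (∀ U ∈ 𝒰, SemiOpen T U) → A ⊆ ⋃₀ 𝒰 →
    ∃ 𝒱 ⊆ 𝒰, 𝒱.Finite ∧ A ⊆ ⋃ V ∈ 𝒱, sCl T V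

/-- Locally S-closed: every point has a neighbourhood which is S-closed relative to `X`. -/
def LocallySClosed (T : TopologicalSpace X) : Prop :=
  ∀ x : X, ∃ N ∈ @nhds X T x, SClosedRel T N

/-- Locally s-closed: every point has a neighbourhood which is s-closed relative to `X`. -/
def LocallySmallSClosed (T : TopologicalSpace X) : Prop :=
  ∀ x : X, ∃ N ∈ @nhds X T x, SmallSClosedRel T N

/-- para-S-closed: every semi-open cover has a locally finite refinement by
semi-open sets whose union is dense. -/
def ParaSClosed (T : TopologicalSpace X) : Prop :=
  letI := T
  ∀ 𝒰 : Set (Set X), (∀ U ∈ 𝒰, SemiOpen T U) → ⋃₀ 𝒰 = univ →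
    ∃ 𝒱 : Set (Set X), (∀ V ∈ 𝒱, SemiOpen T V) ∧ LocFinite T 𝒱 ∧ Refines 𝒱 𝒰 ∧
      closure (⋃₀ 𝒱) = univ

/-- para-rc-Lindelöf: every regular closed cover has a locally countable
refinement by regular closed sets. -/
def ParaRcLindelof (T : TopologicalSpace X) : Prop :=
  ∀ 𝒰 : Set (Set X), (∀ U ∈ 𝒰, RegClosed T U) → ⋃₀ 𝒰 = univ →
    ∃ 𝒱 : Set (Set X), (∀ V ∈ 𝒱, RegClosed T V) ∧ LocCountable T 𝒱 ∧ Refines 𝒱 𝒰 ∧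
      ⋃₀ 𝒱 = univ

/-- α-subparacompact: every α-open cover has a σ-discrete closed refinement covering `X`. -/
def AlphaSubparacompact (T : TopologicalSpace X) : Prop :=
  ∀ 𝒰 : Set (Set X), (∀ U ∈ 𝒰, AlphaOpen T U) → ⋃₀ 𝒰 = univ →
    ∃ 𝒱 : Set (Set X), (∀ V ∈ 𝒱, @IsClosed X T V) ∧ SigmaDiscrete T 𝒱 ∧ Refines 𝒱 𝒰 ∧
      ⋃₀ 𝒱 = univ

/-- gα-closed: `Cl_α A ⊆ U` whenever `A ⊆ U` with `U` α-open. -/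
def GAlphaClosed (T : TopologicalSpace X) (A : Set X) : Prop :=
  ∀ U : Set X, AlphaOpen T U → A ⊆ U → @closure X (alphaTop T) A ⊆ U

/-- α-paracompact: every α-open cover has a locally finite open refinement. -/
def AlphaParacompact (T : TopologicalSpace X) : Prop :=
  ∀ 𝒰 : Set (Set X), (∀ U ∈ 𝒰, AlphaOpen T U) → ⋃₀ 𝒰 = univ →
    ∃ 𝒱 : Set (Set X), (∀ V ∈ 𝒱, T.IsOpen V) ∧ LocFinite T 𝒱 ∧ Refines 𝒱 𝒰 ∧
      ⋃₀ 𝒱 = univ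

/-! The topologies `T` and `T^α` have the same semi-open sets, because
`Cl_α (Int_α A) = Cl (Int A)` for every `A`: `Int A ⊆ Int_α A ⊆ Cl (Int A)`, and the α-closure of
a `T`-open set is its `T`-closure. Hence they also have the same semi-closed sets and semi-closures,
and the two s-closedness conditions coincide. -/

open Topology

section

variable [t : TopologicalSpace X]

theorem alphaTop_le : alphaTop t ≤ t := fun U (hU : IsOpen U) => by
  show U ⊆ interior (closure (interior U))
  rw [hU.interior_eq]
  exact interior_maximal subset_closure hU

theorem closure_alphaTop_of_isOpen {U : Set X} (hU : IsOpen U) :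
    closure[alphaTop t] U = closure U := by
  refine (closure.mono alphaTop_le).antisymm ?_
  rw [← compl_subset_compl, ← @interior_compl X (alphaTop t)]
  set W := @interior X (alphaTop t) Uᶜ
  have hWU : W ⊆ Uᶜ := @interior_subset X (alphaTop t) Uᶜ
  calc W ⊆ interior (closure (interior W)) := @isOpen_interior X (alphaTop t) Uᶜ
    _ ⊆ interior Uᶜ :=
      interior_mono (closure_minimal (interior_subset.trans hWU) hU.isClosed_compl)
    _ = (closure U)ᶜ := interior_compl

theorem interior_alphaTop_subset_closure_interior (A : Set X) :
    @interior X (alphaTop t) A ⊆ closure (interior A) := fun _ hx =>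
  closure_mono (interior_mono (@interior_subset X (alphaTop t) A))
    (interior_subset ((@isOpen_interior X (alphaTop t) A) hx))

theorem closure_alphaTop_interior_alphaTop (A : Set X) :
    closure[alphaTop t] (@interior X (alphaTop t) A) = closure (interior A) := by
  refine (closure.mono alphaTop_le).trans ?_ |>.antisymm ?_
  · simpa using closure_mono (interior_alphaTop_subset_closure_interior A)
  · rw [← closure_alphaTop_of_isOpen isOpen_interior]
    exact @closure_mono X (alphaTop t) _ _ <| @interior_maximal X (alphaTop t) _ _ interior_subset
      (isOpen_interior.mono alphaTop_le)

theorem semiOpen_alphaTop_iff {A : Set X} : SemiOpen (alphaTop t) A ↔ SemiOpen t A := by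
  rw [SemiOpen, closure_alphaTop_interior_alphaTop, SemiOpen]

theorem sCl_alphaTop (A : Set X) : sCl (alphaTop t) A = sCl t A := by
  simp only [sCl, SemiClosed, semiOpen_alphaTop_iff]

end

/-- `(X, 𝒯^α)` is s-closed iff `(X, 𝒯)` is s-closed. -/
theorem smallSClosed_alphaTop_iff (T : TopologicalSpace X) :
    SmallSClosed (alphaTop T) ↔ SmallSClosed T := by
  simp only [SmallSClosed, semiOpen_alphaTop_iff, sCl_alphaTop]
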